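/- arXiv:2112.14948 — 6 statements merged into one kernel-verified Lean document; each statement's English description precedes it below -/
import Mathlib

section
/- Let q, p, n be positive integers, let A be a real q×q matrix with operator norm ‖A‖ < 1, let B be a real q×p matrix, let f : ℝⁿ → ℝⁿ be a bijection, and let ℓ : ℝⁿ → ℝᵖ be a bounded function. Then for every x ∈ ℝⁿ the series T(x) = Σ_{j=0}^{∞} Aʲ B ℓ(f^{-(j+1)}(x)) converges absolutely, and the resulting map T : ℝⁿ → ℝ^q satisfies the functional equation T(f(x)) = A T(x) + B ℓ(x) for all x ∈ ℝⁿ. -/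
/-! Since `‖Aʲ‖ ≤ ‖A‖ʲ` and the terms `B ℓ(·)` are uniformly bounded, the series is dominated by a
convergent geometric series. Because `f⁻¹^[j+1] (f x) = f⁻¹^[j] x`, the series for `T (f x)` is the
series for `T x` with the index shifted by one; splitting off its `j = 0` term `B (ℓ x)` and
pulling one factor `A` out of the rest gives the functional equation. -/

namespace ContinuousLinearMap

variable {𝕜 E : Type*} [NontriviallyNormedField 𝕜] [NormedAddCommGroup E] [NormedSpace 𝕜 E]

theorem norm_pow_apply_le (A : E →L[𝕜] E) (j : ℕ) (w : E) : ‖(A ^ j) w‖ ≤ ‖A‖ ^ j * ‖w‖ := by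
  induction j with
  | zero => simp
  | succ k ih =>
    calc ‖(A ^ (k + 1)) w‖ = ‖A ((A ^ k) w)‖ := by rw [pow_succ']; rfl
      _ ≤ ‖A‖ * (‖A‖ ^ k * ‖w‖) := A.le_opNorm_of_le ih
      _ = ‖A‖ ^ (k + 1) * ‖w‖ := by ring

theorem summable_norm_pow_apply {A : E →L[𝕜] E} (hA : ‖A‖ < 1) {v : ℕ → E} {M : ℝ}
    (hv : ∀ j, ‖v j‖ ≤ M) : Summable fun j => ‖(A ^ j) (v j)‖ :=
  ((summable_geometric_of_lt_one (norm_nonneg A) hA).mul_right M).of_nonneg_of_le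
    (fun _ => norm_nonneg _)
    (fun j => (A.norm_pow_apply_le j (v j)).trans (by gcongr; exact hv j))

theorem tsum_pow_apply_eq_add_tsum_succ [CompleteSpace E] {A : E →L[𝕜] E} (hA : ‖A‖ < 1)
    {v : ℕ → E} {M : ℝ} (hv : ∀ j, ‖v j‖ ≤ M) :
    ∑' j, (A ^ j) (v j) = v 0 + A (∑' j, (A ^ j) (v (j + 1))) := by
  have hsum := (summable_norm_pow_apply hA hv).of_norm
  have hsum_succ := (summable_norm_pow_apply hA fun j => hv (j + 1)).of_norm
  calc ∑' j, (A ^ j) (v j) = v 0 + ∑' j, A ((A ^ j) (v (j + 1))) := by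
        rw [hsum.tsum_eq_zero_add]
        simp only [pow_zero, pow_succ']
        rfl
    _ = v 0 + A (∑' j, (A ^ j) (v (j + 1))) := by rw [A.map_tsum hsum_succ]

end ContinuousLinearMap

theorem lemma1_existence_general
    (q p n : ℕ)
    (A : EuclideanSpace ℝ (Fin q) →L[ℝ] EuclideanSpace ℝ (Fin q)) (hA : ‖A‖ < 1)
    (B : EuclideanSpace ℝ (Fin p) →L[ℝ] EuclideanSpace ℝ (Fin q))
    (f : EuclideanSpace ℝ (Fin n) → EuclideanSpace ℝ (Fin n)) (hf : Function.Bijective f)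
    (ℓ : EuclideanSpace ℝ (Fin n) → EuclideanSpace ℝ (Fin p))
    (hℓ : ∃ M : ℝ, ∀ x, ‖ℓ x‖ ≤ M) :
    (∀ x, Summable fun j : ℕ => ‖(A ^ j) (B (ℓ ((Function.invFun f)^[j + 1] x)))‖) ∧
    (∀ x, (∑' j : ℕ, (A ^ j) (B (ℓ ((Function.invFun f)^[j + 1] (f x))))) =
        A (∑' j : ℕ, (A ^ j) (B (ℓ ((Function.invFun f)^[j + 1] x)))) + B (ℓ x)) := by
  obtain ⟨M, hM⟩ := hℓ
  have hBℓ : ∀ z, ‖B (ℓ z)‖ ≤ ‖B‖ * M := fun z => B.le_opNorm_of_le (hM z)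
  refine ⟨fun x => ContinuousLinearMap.summable_norm_pow_apply hA fun j => hBℓ _, fun x => ?_⟩
  have hshift : ∀ j, (Function.invFun f)^[j + 1] (f x) = (Function.invFun f)^[j] x := fun j => by
    rw [Function.iterate_succ_apply, Function.leftInverse_invFun hf.injective]
  simp only [hshift]
  rw [ContinuousLinearMap.tsum_pow_apply_eq_add_tsum_succ hA fun j => hBℓ _,
    Function.iterate_zero_apply, add_comm]

/-- Lemma 1 (existence and explicit formula): if `‖A‖ < 1`, `f` is a bijection and `ℓ` is
bounded, then the series `T x = ∑_{j≥0} A^j B ℓ(f^{-(j+1)} x)` converges absolutely and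
`T` satisfies `T (f x) = A (T x) + B (ℓ x)`. -/
theorem lemma1_existence
    (q p n : ℕ) (hq : 0 < q) (hp : 0 < p) (hn : 0 < n)
    (A : EuclideanSpace ℝ (Fin q) →L[ℝ] EuclideanSpace ℝ (Fin q)) (hA : ‖A‖ < 1)
    (B : EuclideanSpace ℝ (Fin p) →L[ℝ] EuclideanSpace ℝ (Fin q))
    (f : EuclideanSpace ℝ (Fin n) → EuclideanSpace ℝ (Fin n)) (hf : Function.Bijective f)
    (ℓ : EuclideanSpace ℝ (Fin n) → EuclideanSpace ℝ (Fin p))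
    (hℓ : ∃ M : ℝ, ∀ x, ‖ℓ x‖ ≤ M) :
    (∀ x, Summable fun j : ℕ => ‖(A ^ j) (B (ℓ ((Function.invFun f)^[j + 1] x)))‖) ∧
    (∀ x, (∑' j : ℕ, (A ^ j) (B (ℓ ((Function.invFun f)^[j + 1] (f x))))) =
        A (∑' j : ℕ, (A ^ j) (B (ℓ ((Function.invFun f)^[j + 1] x)))) + B (ℓ x)) :=
  lemma1_existence_general q p n A hA B f hf ℓ hℓ
end

section
/- Let A be a real q×q matrix with operator norm ‖A‖ < 1, B a real q×p matrix, f : ℝⁿ → ℝⁿ a bijection, and ℓ : ℝⁿ → ℝᵖ a bounded function. Assume moreover that ℓ is globally Lipschitz with constant L_ℓ, that f⁻¹ is globally Lipschitz with constant L_f, and that ‖A‖·L_f < 1. Then the map T(x) = Σ_{j=0}^{∞} Aʲ B ℓ(f^{-(j+1)}(x)) is globally Lipschitz with Lipschitz constant ‖B‖·L_ℓ·L_f / (1 − ‖A‖·L_f). -/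
/-!
Each term `x ↦ Aʲ B ℓ(f^{-(j+1)} x)` is Lipschitz with constant `‖A‖ʲ ‖B‖ Lℓ Lf^{j+1}`, since
the `(j+1)`-fold iterate of `f⁻¹` is `Lf^{j+1}`-Lipschitz. Boundedness of `ℓ` and `‖A‖ < 1` make
both series converge, so the difference `T x - T y` is the series of termwise differences, and
its norm is bounded by the geometric series `‖B‖ Lℓ Lf ‖x - y‖ ∑ⱼ (‖A‖ Lf)ʲ`.
-/

lemma nonneg_of_norm_sub_le_mul {X E : Type*} [NormedAddCommGroup X] [SeminormedAddCommGroup E]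
    {g : X → E} {L : ℝ} (h : ∀ x y, ‖g x - g y‖ ≤ L * ‖x - y‖) {x y : X} (hxy : x ≠ y) :
    0 ≤ L :=
  nonneg_of_mul_nonneg_left ((norm_nonneg _).trans (h x y))
    (norm_pos_iff.mpr (sub_ne_zero.mpr hxy))

lemma norm_iterate_sub_le {X : Type*} [SeminormedAddCommGroup X] {g : X → X} {L : ℝ}
    (hL : 0 ≤ L) (h : ∀ x y, ‖g x - g y‖ ≤ L * ‖x - y‖) (k : ℕ) (x y : X) :
    ‖g^[k] x - g^[k] y‖ ≤ L ^ k * ‖x - y‖ := by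
  induction k with
  | zero => simp
  | succ k ih =>
    rw [Function.iterate_succ_apply', Function.iterate_succ_apply']
    calc ‖g (g^[k] x) - g (g^[k] y)‖ ≤ L * ‖g^[k] x - g^[k] y‖ := h _ _
      _ ≤ L * (L ^ k * ‖x - y‖) := by gcongr
      _ = L ^ (k + 1) * ‖x - y‖ := by ring

lemma ContinuousLinearMap.norm_pow_apply_le_s1 {𝕜 E : Type*} [NontriviallyNormedField 𝕜]
    [SeminormedAddCommGroup E] [NormedSpace 𝕜 E] (A : E →L[𝕜] E) (j : ℕ) (v : E) :
    ‖(A ^ j) v‖ ≤ ‖A‖ ^ j * ‖v‖ := by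
  induction j with
  | zero => simp
  | succ j ih =>
    rw [pow_succ']
    calc ‖(A * A ^ j) v‖ ≤ ‖A‖ * ‖(A ^ j) v‖ := A.le_opNorm _
      _ ≤ ‖A‖ * (‖A‖ ^ j * ‖v‖) := by gcongr
      _ = ‖A‖ ^ (j + 1) * ‖v‖ := by ring

lemma norm_tsum_sub_tsum_le {ι E : Type*} [NormedAddCommGroup E] {F G : ι → E} {K : ι → ℝ}
    {a : ℝ} (hF : Summable F) (hG : Summable G) (hK : HasSum K a)
    (h : ∀ i, ‖F i - G i‖ ≤ K i) : ‖∑' i, F i - ∑' i, G i‖ ≤ a := by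
  rw [← hF.tsum_sub hG]
  exact tsum_of_norm_bounded hK h

theorem lemma1_T_lipschitz_general
    (q p n : ℕ)
    (A : EuclideanSpace ℝ (Fin q) →L[ℝ] EuclideanSpace ℝ (Fin q)) (hA : ‖A‖ < 1)
    (B : EuclideanSpace ℝ (Fin p) →L[ℝ] EuclideanSpace ℝ (Fin q))
    (f : EuclideanSpace ℝ (Fin n) → EuclideanSpace ℝ (Fin n))
    (ℓ : EuclideanSpace ℝ (Fin n) → EuclideanSpace ℝ (Fin p))
    (hℓbdd : ∃ M : ℝ, ∀ x, ‖ℓ x‖ ≤ M)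
    (Lℓ Lf : ℝ)
    (hℓLip : ∀ x y, ‖ℓ x - ℓ y‖ ≤ Lℓ * ‖x - y‖)
    (hfinvLip : ∀ x y, ‖Function.invFun f x - Function.invFun f y‖ ≤ Lf * ‖x - y‖)
    (hALf : ‖A‖ * Lf < 1) :
    ∀ x y,
      ‖(∑' j : ℕ, (A ^ j) (B (ℓ ((Function.invFun f)^[j + 1] x)))) -
          (∑' j : ℕ, (A ^ j) (B (ℓ ((Function.invFun f)^[j + 1] y))))‖ ≤
        (‖B‖ * Lℓ * Lf / (1 - ‖A‖ * Lf)) * ‖x - y‖ := by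
  intro x y
  set g := Function.invFun f
  rcases eq_or_ne x y with rfl | hxy
  · simp
  have hLf : 0 ≤ Lf := nonneg_of_norm_sub_le_mul hfinvLip hxy
  have hLℓ : 0 ≤ Lℓ := nonneg_of_norm_sub_le_mul hℓLip hxy
  obtain ⟨M, hM⟩ := hℓbdd
  have hsum (z) : Summable fun j : ℕ ↦ (A ^ j) (B (ℓ (g^[j + 1] z))) := by
    refine .of_norm_bounded ((summable_geometric_of_lt_one (norm_nonneg A) hA).mul_right
      (‖B‖ * M)) fun j ↦ (A.norm_pow_apply_le_s1 j _).trans ?_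
    gcongr
    exact (B.le_opNorm _).trans (by gcongr; exact hM _)
  have hterm (j : ℕ) : ‖(A ^ j) (B (ℓ (g^[j + 1] x))) - (A ^ j) (B (ℓ (g^[j + 1] y)))‖ ≤
      ‖B‖ * Lℓ * Lf * ‖x - y‖ * (‖A‖ * Lf) ^ j := by
    rw [← map_sub, ← map_sub]
    calc _ ≤ ‖A‖ ^ j * (‖B‖ * ‖ℓ (g^[j + 1] x) - ℓ (g^[j + 1] y)‖) :=
          (A.norm_pow_apply_le_s1 j _).trans (by gcongr; exact B.le_opNorm _)
      _ ≤ ‖A‖ ^ j * (‖B‖ * (Lℓ * (Lf ^ (j + 1) * ‖x - y‖))) := by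
          gcongr
          exact (hℓLip _ _).trans (by gcongr; exact norm_iterate_sub_le hLf hfinvLip _ _ _)
      _ = _ := by ring
  have hgeom := (hasSum_geometric_of_lt_one (by positivity) hALf).mul_left
    (‖B‖ * Lℓ * Lf * ‖x - y‖)
  calc _ ≤ ‖B‖ * Lℓ * Lf * ‖x - y‖ * (1 - ‖A‖ * Lf)⁻¹ :=
        norm_tsum_sub_tsum_le (hsum x) (hsum y) hgeom hterm
    _ = _ := by ring

/-- Lipschitz continuity of the series solution `T x = ∑_{j≥0} A^j B ℓ(f^{-(j+1)} x)`:
if `ℓ` is `Lℓ`-Lipschitz, `f⁻¹` is `Lf`-Lipschitz and `‖A‖ * Lf < 1`, then `T` is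
globally Lipschitz with constant `‖B‖ * Lℓ * Lf / (1 - ‖A‖ * Lf)`. -/
theorem lemma1_T_lipschitz
    (q p n : ℕ)
    (A : EuclideanSpace ℝ (Fin q) →L[ℝ] EuclideanSpace ℝ (Fin q)) (hA : ‖A‖ < 1)
    (B : EuclideanSpace ℝ (Fin p) →L[ℝ] EuclideanSpace ℝ (Fin q))
    (f : EuclideanSpace ℝ (Fin n) → EuclideanSpace ℝ (Fin n)) (hf : Function.Bijective f)
    (ℓ : EuclideanSpace ℝ (Fin n) → EuclideanSpace ℝ (Fin p))
    (hℓbdd : ∃ M : ℝ, ∀ x, ‖ℓ x‖ ≤ M)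
    (Lℓ Lf : ℝ)
    (hℓLip : ∀ x y, ‖ℓ x - ℓ y‖ ≤ Lℓ * ‖x - y‖)
    (hfinvLip : ∀ x y, ‖Function.invFun f x - Function.invFun f y‖ ≤ Lf * ‖x - y‖)
    (hALf : ‖A‖ * Lf < 1) :
    ∀ x y,
      ‖(∑' j : ℕ, (A ^ j) (B (ℓ ((Function.invFun f)^[j + 1] x)))) -
          (∑' j : ℕ, (A ^ j) (B (ℓ ((Function.invFun f)^[j + 1] y))))‖ ≤
        (‖B‖ * Lℓ * Lf / (1 - ‖A‖ * Lf)) * ‖x - y‖ :=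
  lemma1_T_lipschitz_general q p n A hA B f ℓ hℓbdd Lℓ Lf hℓLip hfinvLip hALf
end

section
/- Let A be a real q×q matrix whose powers satisfy Aᵏ → 0 as k → ∞, let B be a real q×p matrix, let f : ℝⁿ → ℝⁿ be a bijection, and let ℓ : ℝⁿ → ℝᵖ be any function. If S₁, S₂ : ℝⁿ → ℝ^q are bounded functions that both satisfy S(f(x)) = A S(x) + B ℓ(x) for all x ∈ ℝⁿ, then S₁ = S₂. -/
open Filter Topology Function

/-- If `D ∘ f = A ∘ D` then `D x = Aᵏ (D y)` whenever `fᵏ y = x`, and such `y` exist because `f` is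
surjective; boundedness of `D` then gives `‖D x‖ ≤ ‖Aᵏ‖ M → 0`. -/
theorem Function.Semiconj.eq_zero_of_tendsto_pow_zero {α 𝕜 E : Type*} [NontriviallyNormedField 𝕜]
    [NormedAddCommGroup E] [NormedSpace 𝕜 E] {f : α → α} (hf : Surjective f) {A : E →L[𝕜] E}
    (hA : Tendsto (fun k : ℕ => A ^ k) atTop (𝓝 0)) {D : α → E} (hD : Semiconj D f A)
    (hbdd : ∃ M : ℝ, ∀ x, ‖D x‖ ≤ M) : D = 0 := by
  obtain ⟨M, hM⟩ := hbdd
  funext x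
  have hbound : ∀ k : ℕ, ‖D x‖ ≤ ‖A ^ k‖ * M := by
    intro k
    obtain ⟨y, rfl⟩ := hf.iterate k x
    rw [hD.iterate_right k y, ← FunLike.coe_pow_eq_iterate]
    exact (A ^ k).le_opNorm_of_le (hM y)
  have hlim : Tendsto (fun k : ℕ => ‖A ^ k‖ * M) atTop (𝓝 0) := by
    simpa using hA.norm.mul_const M
  exact norm_le_zero_iff.mp (ge_of_tendsto' hlim hbound)

/-- Uniqueness part of Lemma 1: if `A^k → 0`, then the functional equation
`S (f x) = A (S x) + B (ℓ x)` has at most one bounded solution. -/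
theorem lemma1_uniqueness
    (q p n : ℕ)
    (A : EuclideanSpace ℝ (Fin q) →L[ℝ] EuclideanSpace ℝ (Fin q))
    (hA : Filter.Tendsto (fun k : ℕ => A ^ k) Filter.atTop (nhds 0))
    (B : EuclideanSpace ℝ (Fin p) →L[ℝ] EuclideanSpace ℝ (Fin q))
    (f : EuclideanSpace ℝ (Fin n) → EuclideanSpace ℝ (Fin n)) (hf : Function.Bijective f)
    (ℓ : EuclideanSpace ℝ (Fin n) → EuclideanSpace ℝ (Fin p))
    (S₁ S₂ : EuclideanSpace ℝ (Fin n) → EuclideanSpace ℝ (Fin q))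
    (hS₁bdd : ∃ M : ℝ, ∀ x, ‖S₁ x‖ ≤ M)
    (hS₂bdd : ∃ M : ℝ, ∀ x, ‖S₂ x‖ ≤ M)
    (hS₁ : ∀ x, S₁ (f x) = A (S₁ x) + B (ℓ x))
    (hS₂ : ∀ x, S₂ (f x) = A (S₂ x) + B (ℓ x)) :
    S₁ = S₂ := by
  obtain ⟨M₁, hM₁⟩ := hS₁bdd
  obtain ⟨M₂, hM₂⟩ := hS₂bdd
  have hsemiconj : Semiconj (S₁ - S₂) f A := fun x => by
    simp only [Pi.sub_apply, hS₁, hS₂, map_sub, add_sub_add_right_eq_sub]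
  have hbdd : ∃ M : ℝ, ∀ x, ‖(S₁ - S₂) x‖ ≤ M :=
    ⟨M₁ + M₂, fun x => (norm_sub_le _ _).trans (add_le_add (hM₁ x) (hM₂ x))⟩
  exact sub_eq_zero.mp (hsemiconj.eq_zero_of_tendsto_pow_zero hf.2 hA hbdd)
end

section
/- Let A be a real q×q matrix with ‖A‖ < 1, B a real q×p matrix, f : ℝⁿ → ℝⁿ, ℓ : ℝⁿ → ℝᵖ, and T : ℝⁿ → ℝ^q with T(f(x)) = A T(x) + B ℓ(x) for all x. Let x_{k+1} = f(x_k), z_{k+1} = A z_k + B ℓ(x_k), and suppose there is a uniformly continuous map T⁻¹ : ℝ^q → ℝⁿ such that T⁻¹(T(x_k)) = x_k for every k. Then the state estimate x̂_k := T⁻¹(z_k) satisfies ‖x̂_k − x_k‖ → 0 as k → ∞. -/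
/-! The error `e_k = z_k - T(x_k)` obeys `e_{k+1} = A e_k`, because the observer and the
transformed trajectory are driven by the same input `B ℓ(x_k)`; so `e_k = A^k e_0 → 0` when
`‖A‖ < 1`. Since `x_k = T⁻¹(T(x_k))`, uniform continuity of `T⁻¹` turns `z_k - T(x_k) → 0`
into `T⁻¹(z_k) - x_k → 0`. -/

open Filter Topology

theorem ContinuousLinearMap.sub_eq_pow_apply_of_recurrence {R M : Type*} [Semiring R]
    [TopologicalSpace M] [AddCommGroup M] [Module R M] (A : M →L[R] M) {u a b : ℕ → M}
    (ha : ∀ k, a (k + 1) = A (a k) + u k) (hb : ∀ k, b (k + 1) = A (b k) + u k) (k : ℕ) :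
    a k - b k = (A ^ k) (a 0 - b 0) := by
  induction k with
  | zero => simp
  | succ k ih =>
    rw [ha, hb, pow_succ', mul_apply_eq_comp, ← ih, map_sub]
    abel

theorem ContinuousLinearMap.tendsto_pow_apply_of_norm_lt_one {𝕜 E : Type*}
    [NontriviallyNormedField 𝕜] [NormedAddCommGroup E] [NormedSpace 𝕜 E] {A : E →L[𝕜] E}
    (hA : ‖A‖ < 1) (v : E) : Tendsto (fun k : ℕ => (A ^ k) v) atTop (𝓝 0) := by
  simpa only [Function.comp_def, ContinuousLinearMap.apply_apply, map_zero] using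
    ((ContinuousLinearMap.apply 𝕜 E v).continuous.tendsto 0).comp
      (tendsto_pow_atTop_nhds_zero_of_norm_lt_one hA)

theorem UniformContinuous.tendsto_dist_comp_zero {α β ι : Type*} [PseudoMetricSpace α]
    [PseudoMetricSpace β] {g : α → β} (hg : UniformContinuous g) {a b : ι → α} {l : Filter ι}
    (hab : Tendsto (fun i => dist (a i) (b i)) l (𝓝 0)) :
    Tendsto (fun i => dist (g (a i)) (g (b i))) l (𝓝 0) :=
  tendsto_uniformity_iff_dist_tendsto_zero.1 <|
    Tendsto.comp hg <| tendsto_uniformity_iff_dist_tendsto_zero (f := fun i => (a i, b i)) |>.2 hab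

/-- Full observer statement of Lemma 1: with a uniformly continuous left inverse `T⁻¹`
of `T` along the trajectory, the state estimate `x̂_k = T⁻¹(z_k)` satisfies
`‖x̂_k - x_k‖ → 0`. -/
theorem observer_state_estimate_convergence
    (q p n : ℕ)
    (A : EuclideanSpace ℝ (Fin q) →L[ℝ] EuclideanSpace ℝ (Fin q)) (hA : ‖A‖ < 1)
    (B : EuclideanSpace ℝ (Fin p) →L[ℝ] EuclideanSpace ℝ (Fin q))
    (f : EuclideanSpace ℝ (Fin n) → EuclideanSpace ℝ (Fin n))
    (ℓ : EuclideanSpace ℝ (Fin n) → EuclideanSpace ℝ (Fin p))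
    (T : EuclideanSpace ℝ (Fin n) → EuclideanSpace ℝ (Fin q))
    (hT : ∀ x, T (f x) = A (T x) + B (ℓ x))
    (x : ℕ → EuclideanSpace ℝ (Fin n)) (hx : ∀ k, x (k + 1) = f (x k))
    (z : ℕ → EuclideanSpace ℝ (Fin q)) (hz : ∀ k, z (k + 1) = A (z k) + B (ℓ (x k)))
    (Tinv : EuclideanSpace ℝ (Fin q) → EuclideanSpace ℝ (Fin n))
    (hTinvUC : UniformContinuous Tinv)
    (hTinv : ∀ k, Tinv (T (x k)) = x k) :
    Filter.Tendsto (fun k : ℕ => ‖Tinv (z k) - x k‖) Filter.atTop (nhds 0) := by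
  have hTx : ∀ k, T (x (k + 1)) = A (T (x k)) + B (ℓ (x k)) := fun k => by rw [hx, hT]
  have herror : ∀ k, z k - T (x k) = (A ^ k) (z 0 - T (x 0)) :=
    A.sub_eq_pow_apply_of_recurrence hz hTx
  have hzT : Tendsto (fun k => dist (z k) (T (x k))) atTop (𝓝 0) := by
    refine (tendsto_zero_iff_norm_tendsto_zero.1
      (A.tendsto_pow_apply_of_norm_lt_one hA (z 0 - T (x 0)))).congr fun k => ?_
    rw [dist_eq_norm, herror k]
  simpa only [hTinv, dist_eq_norm] using hTinvUC.tendsto_dist_comp_zero hzT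
end

section
/- Let A be a real q×q matrix, B a real q×p matrix, f : ℝⁿ × ℝᵐ → ℝⁿ, ℓ : ℝⁿ → ℝᵖ, and Ω : ℝ^q × ℝᵐ → ℝ^q. Let λ ≥ 0 satisfy ‖A‖ + λ < 1 and suppose ‖Ω(z₁,u) − Ω(z₂,u)‖ ≤ λ ‖z₁ − z₂‖ for all z₁, z₂ ∈ ℝ^q and all u ∈ ℝᵐ. Suppose T : ℝⁿ → ℝ^q satisfies T(f(x,u)) = A T(x) + B ℓ(x) + Ω(T(x),u) for all x ∈ ℝⁿ and u ∈ ℝᵐ. Then for any input sequence (u_k), any trajectory x_{k+1} = f(x_k,u_k), and the observer z_{k+1} = A z_k + B ℓ(x_k) + Ω(z_k,u_k), one has ‖z_k − T(x_k)‖ ≤ (‖A‖+λ)ᵏ ‖z₀ − T(x₀)‖ for all k ≥ 0; in particular z_k − T(x_k) → 0. -/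
/-! Subtracting the functional equation for `T` from the observer recursion, the terms `B ℓ(x_k)`
cancel and the error `e_k = z_k - T(x_k)` satisfies `e_{k+1} = A e_k + (Ω(z_k,u_k) - Ω(T(x_k),u_k))`.
Hence `‖e_{k+1}‖ ≤ (‖A‖ + λ) ‖e_k‖`, and iterating gives the geometric bound, which tends to zero
because `‖A‖ + λ < 1`. -/

open Filter Topology

section

variable {𝕜 E F : Type*} [NontriviallyNormedField 𝕜]
  [SeminormedAddCommGroup E] [SeminormedAddCommGroup F] [NormedSpace 𝕜 E] [NormedSpace 𝕜 F]

theorem ContinuousLinearMap.norm_add_add_sub_add_add_le (A : E →L[𝕜] F) (c : F) {g : E → F}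
    {lam : ℝ} (hg : ∀ a b, ‖g a - g b‖ ≤ lam * ‖a - b‖) (a b : E) :
    ‖(A a + c + g a) - (A b + c + g b)‖ ≤ (‖A‖ + lam) * ‖a - b‖ :=
  calc ‖(A a + c + g a) - (A b + c + g b)‖ = ‖A (a - b) + (g a - g b)‖ := by
        rw [map_sub]; abel_nf
    _ ≤ ‖A‖ * ‖a - b‖ + lam * ‖a - b‖ :=
        (norm_add_le _ _).trans (add_le_add (A.le_opNorm _) (hg a b))
    _ = (‖A‖ + lam) * ‖a - b‖ := (add_mul _ _ _).symm

end

theorem tendsto_zero_of_norm_le_pow_mul {E : Type*} [SeminormedAddCommGroup E] {e : ℕ → E}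
    {c C : ℝ} (hc₀ : 0 ≤ c) (hc₁ : c < 1) (he : ∀ k, ‖e k‖ ≤ c ^ k * C) :
    Tendsto e atTop (𝓝 0) :=
  squeeze_zero_norm he <| by
    simpa using (tendsto_pow_atTop_nhds_zero_of_lt_one hc₀ hc₁).mul_const C

/-- Lemma 2 (non-autonomous observer): if `Ω` is `λ`-Lipschitz in `z`, `‖A‖ + λ < 1`, and
`T (f (x,u)) = A (T x) + B (ℓ x) + Ω (T x, u)`, then the observer error of
`z_{k+1} = A z_k + B ℓ(x_k) + Ω(z_k, u_k)` satisfies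
`‖z_k - T x_k‖ ≤ (‖A‖ + λ)^k ‖z_0 - T x_0‖` and tends to zero. -/
theorem lemma2_nonautonomous_observer
    (q p n m : ℕ)
    (A : EuclideanSpace ℝ (Fin q) →L[ℝ] EuclideanSpace ℝ (Fin q))
    (B : EuclideanSpace ℝ (Fin p) →L[ℝ] EuclideanSpace ℝ (Fin q))
    (f : EuclideanSpace ℝ (Fin n) × EuclideanSpace ℝ (Fin m) → EuclideanSpace ℝ (Fin n))
    (ℓ : EuclideanSpace ℝ (Fin n) → EuclideanSpace ℝ (Fin p))
    (Ω : EuclideanSpace ℝ (Fin q) × EuclideanSpace ℝ (Fin m) → EuclideanSpace ℝ (Fin q))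
    (lam : ℝ) (hlam : 0 ≤ lam) (hcontraction : ‖A‖ + lam < 1)
    (hΩ : ∀ (z₁ z₂ : EuclideanSpace ℝ (Fin q)) (u : EuclideanSpace ℝ (Fin m)),
      ‖Ω (z₁, u) - Ω (z₂, u)‖ ≤ lam * ‖z₁ - z₂‖)
    (T : EuclideanSpace ℝ (Fin n) → EuclideanSpace ℝ (Fin q))
    (hT : ∀ (x : EuclideanSpace ℝ (Fin n)) (u : EuclideanSpace ℝ (Fin m)),
      T (f (x, u)) = A (T x) + B (ℓ x) + Ω (T x, u))
    (u : ℕ → EuclideanSpace ℝ (Fin m))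
    (x : ℕ → EuclideanSpace ℝ (Fin n)) (hx : ∀ k, x (k + 1) = f (x k, u k))
    (z : ℕ → EuclideanSpace ℝ (Fin q))
    (hz : ∀ k, z (k + 1) = A (z k) + B (ℓ (x k)) + Ω (z k, u k)) :
    (∀ k : ℕ, ‖z k - T (x k)‖ ≤ (‖A‖ + lam) ^ k * ‖z 0 - T (x 0)‖) ∧
    Filter.Tendsto (fun k : ℕ => z k - T (x k)) Filter.atTop (nhds 0) := by
  have hrate : 0 ≤ ‖A‖ + lam := add_nonneg (norm_nonneg A) hlam
  have hstep : ∀ k, ‖z (k + 1) - T (x (k + 1))‖ ≤ (‖A‖ + lam) * ‖z k - T (x k)‖ := fun k => by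
    rw [hz k, hx k, hT]
    exact A.norm_add_add_sub_add_add_le (B (ℓ (x k))) (fun a b => hΩ a b (u k)) _ _
  have hbound : ∀ k, ‖z k - T (x k)‖ ≤ (‖A‖ + lam) ^ k * ‖z 0 - T (x 0)‖ :=
    fun k => le_geom (u := fun j => ‖z j - T (x j)‖) hrate k fun j _ => hstep j
  exact ⟨hbound, tendsto_zero_of_norm_le_pow_mul hrate hcontraction hbound⟩
end

section
/- Let a > 0, c ≠ 0, and Δ ≠ 0 be real numbers, and define g(φ) = a·exp(−(φ/c)²). Then the map φ ↦ (g(φ), g(φ+Δ)) from ℝ to ℝ² is injective. -/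
/-! A centred Gaussian reading determines `φ` up to sign, i.e. it determines `φ²`; the shifted
reading determines `(φ + Δ)²`, and the difference `2Δφ + Δ²` of the two is injective in `φ`. -/

open Real

lemma eq_of_sq_eq_sq_of_add_sq_eq_add_sq {R : Type*} [CommRing R] [IsDomain R] [CharZero R]
    {x y Δ : R} (hΔ : Δ ≠ 0) (h : x ^ 2 = y ^ 2) (hshift : (x + Δ) ^ 2 = (y + Δ) ^ 2) :
    x = y := by
  have hlin : 2 * Δ * x = 2 * Δ * y := by linear_combination hshift - h
  exact mul_left_cancel₀ (mul_ne_zero two_ne_zero hΔ) hlin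

lemma mul_exp_neg_div_sq_eq_iff {a c x y : ℝ} (ha : a ≠ 0) (hc : c ≠ 0) :
    a * exp (-(x / c) ^ 2) = a * exp (-(y / c) ^ 2) ↔ x ^ 2 = y ^ 2 := by
  rw [mul_right_inj' ha, exp_eq_exp, neg_inj, div_pow, div_pow,
    div_left_inj' (pow_ne_zero 2 hc)]

/-- Observability via a second shifted receiver: for the Gaussian response
`g(φ) = a exp(-(φ/c)²)` with `a > 0`, `c ≠ 0` and shift `Δ ≠ 0`, the map
`φ ↦ (g φ, g (φ + Δ))` is injective. -/
theorem two_receivers_injective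
    (a c Δ : ℝ) (ha : 0 < a) (hc : c ≠ 0) (hΔ : Δ ≠ 0)
    (g : ℝ → ℝ) (hg : ∀ φ : ℝ, g φ = a * Real.exp (-(φ / c) ^ 2)) :
    Function.Injective (fun φ : ℝ => (g φ, g (φ + Δ))) := by
  intro x y hxy
  obtain ⟨h, hshift⟩ := Prod.mk.inj hxy
  simp only [hg, mul_exp_neg_div_sq_eq_iff ha.ne' hc] at h hshift
  exact eq_of_sq_eq_sq_of_add_sq_eq_add_sq hΔ h hshift
end
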